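/- Induction principle (abstract scheme version): let S be a quasi-compact quasi-separated scheme and E the category of finitely presented separated étale S-schemes. Suppose D ⊆ E is a full subcategory such that: (I1) if X' → X is an open immersion in E and X ∈ D then X' ∈ D; (I2) if X' → X is finite surjective in E with X' affine, then X ∈ D; (I3) if i : U → X is an open immersion and f : X' → X is étale in E and an isomorphism over X \ U, then U, X' ∈ D implies X ∈ D. Then D = E; in particular S ∈ D if S is separated étale finitely presented over itself. -/

import Mathlib

open AlgebraicGeometry CategoryTheory Limits

universe u

/-- Membership in the category `E` of finitely presented separated étale `S`-schemes. -/
def InE {X S : AlgebraicGeometry.Scheme.{u}} (f : X ⟶ S) : Prop :=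
  IsEtale f ∧ LocallyOfFinitePresentation f ∧ QuasiCompact f ∧
    AlgebraicGeometry.IsSeparated f

/-- `f : X' ⟶ X` is an isomorphism over the closed complement `T` of an open subset:
its pullback along any reduced immersion with image `T` is an isomorphism. -/
def IsIsoOverComplement {X' X : AlgebraicGeometry.Scheme.{u}} (f : X' ⟶ X)
    (T : Set X) : Prop :=
  ∀ (Z : AlgebraicGeometry.Scheme.{u}) (j : Z ⟶ X), IsImmersion j → IsReduced Z →
    Set.range j.base = T → IsIso (pullback.snd f j)

/-- An open immersion whose range contains the range of `j` pulls back to an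
isomorphism along `j`. -/
lemma isIso_pullback_snd_of_range_subset {X' X Z : AlgebraicGeometry.Scheme.{u}}
    (f : X' ⟶ X) [IsOpenImmersion f] (j : Z ⟶ X)
    (h : Set.range j.base ⊆ Set.range f.base) : IsIso (pullback.snd f j) := by
  haveI : Epi (pullback.snd f j).base := by
    rw [TopCat.epi_iff_surjective]
    intro z
    have : z ∈ Set.range (pullback.snd f j).base := by
      rw [show Set.range (pullback.snd f j).base = _ from IsOpenImmersion.range_pullbackSnd f j]
      exact h ⟨z, rfl⟩
    exact this
  exact IsOpenImmersion.isIso _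

/-- A quasi-compact open of a quasi-separated scheme has quasi-compact inclusion. -/
lemma quasiCompact_opens_iota {X : AlgebraicGeometry.Scheme.{u}} [QuasiSeparatedSpace X]
    (U : X.Opens) (hU : IsCompact (U : Set X)) : QuasiCompact U.ι := by
  constructor
  intro V hV hVc
  rw [U.ι.isOpenEmbedding.isEmbedding.isCompact_iff, Set.image_preimage_eq_inter_range,
    AlgebraicGeometry.Scheme.Opens.range_ι]
  exact QuasiSeparatedSpace.inter_isCompact V U hV hVc U.isOpen hU

/-- Membership in `E` is stable under restriction to quasi-compact opens. -/
lemma InE.comp_iota {X S : AlgebraicGeometry.Scheme.{u}} {f : X ⟶ S} (hf : InE f)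
    [QuasiSeparatedSpace X] (U : X.Opens) (hU : IsCompact (U : Set X)) :
    InE (U.ι ≫ f) := by
  obtain ⟨h1, h2, h3, h4⟩ := hf
  haveI : Etale f := h1; haveI := h2; haveI := h3; haveI := h4
  haveI : QuasiCompact U.ι := quasiCompact_opens_iota U hU
  exact ⟨inferInstanceAs (Etale _), inferInstance, inferInstance, inferInstance⟩

/-- Induction principle: let `S` be a qcqs scheme and `E` the category of finitely
presented separated étale `S`-schemes.  If `D ⊆ E` is a full subcategory stable under
open immersions (I1), containing every target of a finite surjection in `E` from an
affine scheme (I2), and closed under gluing along an open immersion and an étale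
morphism which is an isomorphism over the closed complement (I3), then `D = E`;
in particular `S ∈ D`. -/
theorem induction_principle (S : AlgebraicGeometry.Scheme.{u})
    [CompactSpace S] [QuasiSeparatedSpace S]
    (D : ∀ ⦃X : AlgebraicGeometry.Scheme.{u}⦄, (X ⟶ S) → Prop)
    (hI1 : ∀ {X' X : AlgebraicGeometry.Scheme.{u}} (g : X' ⟶ X) (f : X ⟶ S),
      InE f → InE (g ≫ f) → IsOpenImmersion g → D f → D (g ≫ f))
    (hI2 : ∀ {X' X : AlgebraicGeometry.Scheme.{u}} (g : X' ⟶ X) (f : X ⟶ S),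
      InE f → InE (g ≫ f) → IsFinite g → Function.Surjective g.base → IsAffine X' →
      D f)
    (hI3 : ∀ {U X X' : AlgebraicGeometry.Scheme.{u}}
      (i : U ⟶ X) (f : X' ⟶ X) (x : X ⟶ S),
      InE x → InE (i ≫ x) → InE (f ≫ x) → IsOpenImmersion i → IsEtale f →
      IsIsoOverComplement f (Set.range i.base)ᶜ →
      D (i ≫ x) → D (f ≫ x) → D x) :
    (∀ {X : AlgebraicGeometry.Scheme.{u}} (f : X ⟶ S), InE f → D f) ∧
      (InE (𝟙 S) → D (𝟙 S)) := by
  -- Every affine object of `E` is in `D`, by (I2) applied to the identity.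
  have affine_case : ∀ {X : AlgebraicGeometry.Scheme.{u}} (f : X ⟶ S),
      InE f → IsAffine X → D f := by
    intro X f hf hX
    refine hI2 (𝟙 X) f hf (by simpa using hf) inferInstance ?_ hX
    intro x
    exact ⟨x, by simp⟩
  have main : ∀ {X : AlgebraicGeometry.Scheme.{u}} (f : X ⟶ S), InE f → D f := by
    intro X f hf
    classical
    obtain ⟨h1, h2, h3, h4⟩ := id hf
    haveI : Etale f := h1; haveI := h2; haveI := h3; haveI := h4
    haveI : CompactSpace X :=
      ⟨by simpa using h3.isCompact_preimage Set.univ isOpen_univ isCompact_univ⟩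
    haveI : QuasiSeparatedSpace X := quasiSeparatedSpace_of_quasiSeparated f
    -- a finite affine open cover of `X`
    obtain ⟨t, ht⟩ := CompactSpace.isCompact_univ.elim_finite_subcover
      (fun U : X.affineOpens => (U : Set X))
      (fun U => U.1.isOpen)
      (by
        intro x _
        obtain ⟨_, ⟨U, hU, rfl⟩, hxU, -⟩ :=
          X.isBasis_affineOpens.exists_subset_of_mem_open (Set.mem_univ x) isOpen_univ
        exact Set.mem_iUnion.mpr ⟨⟨U, hU⟩, hxU⟩)
    -- induction on finite unions of affine opens
    have key : ∀ s : Finset X.Opens, (∀ U ∈ s, IsAffineOpen U) →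
        IsCompact ((s.sup id : X.Opens) : Set X) ∧ D ((s.sup id : X.Opens).ι ≫ f) := by
      intro s
      induction s using Finset.induction_on with
      | empty =>
        intro _
        constructor
        · simp
        · exact affine_case _ (hf.comp_iota ⊥ (by simp)) (isAffineOpen_bot X)
      | @insert a s ha IH =>
        intro hs
        have haff : IsAffineOpen a := hs a (Finset.mem_insert_self a s)
        obtain ⟨hVc, hVD⟩ := IH (fun U hU => hs U (Finset.mem_insert_of_mem hU))
        rw [Finset.sup_insert]
        set V : X.Opens := s.sup id with hV
        set W : X.Opens := id a ⊔ V with hW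
        have hWc : IsCompact (W : Set X) := by
          rw [hW]
          rw [show ((id a ⊔ V : X.Opens) : Set X) = (a : Set X) ∪ (V : Set X) from rfl]
          exact haff.isCompact.union hVc
        refine ⟨hWc, ?_⟩
        -- glue along `V ⊆ W` and the affine open `a ⊆ W`
        have hle1 : V ≤ W := le_sup_right
        have hle2 : a ≤ W := le_sup_left
        have e1 : X.homOfLE hle1 ≫ W.ι ≫ f = V.ι ≫ f := by
          rw [← Category.assoc, X.homOfLE_ι]
        have e2 : X.homOfLE hle2 ≫ W.ι ≫ f = a.ι ≫ f := by
          rw [← Category.assoc, X.homOfLE_ι]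
        refine hI3 (X.homOfLE hle1) (X.homOfLE hle2) (W.ι ≫ f)
          (hf.comp_iota W hWc) ?_ ?_ inferInstance (inferInstanceAs (Etale _)) ?_ ?_ ?_
        · rw [e1]; exact hf.comp_iota V hVc
        · rw [e2]; exact hf.comp_iota a haff.isCompact
        · intro Z j _ _ hrange
          refine isIso_pullback_snd_of_range_subset _ j ?_
          rw [hrange]
          intro w hw
          have hw1 : w.1 ∈ (a : Set X) ∪ (V : Set X) := w.2
          rcases hw1 with hwa | hwV
          · exact ⟨⟨w.1, hwa⟩, Subtype.ext (X.homOfLE_apply hle2 ⟨w.1, hwa⟩)⟩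
          · exact absurd ⟨⟨w.1, hwV⟩, Subtype.ext (X.homOfLE_apply hle1 ⟨w.1, hwV⟩)⟩ hw
        · rw [e1]; exact hVD
        · rw [e2]
          exact affine_case _ (hf.comp_iota a haff.isCompact) haff
    -- the finite affine cover gives `D` for the whole of `X`
    have htop : ((t.image Subtype.val).sup id : X.Opens) = ⊤ := by
      refine le_antisymm le_top ?_
      intro x _
      have := ht (Set.mem_univ x)
      obtain ⟨U, hU⟩ := Set.mem_iUnion.mp this
      obtain ⟨hUt, hxU⟩ := Set.mem_iUnion.mp hU
      exact Finset.le_sup (f := id) (Finset.mem_image_of_mem Subtype.val hUt) hxU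
    have hDtop : D ((⊤ : X.Opens).ι ≫ f) := by
      rw [← htop]
      exact (key _ (by rintro U hU; obtain ⟨V, -, rfl⟩ := Finset.mem_image.mp hU; exact V.2)).2
    refine hI3 (X := X) ((⊤ : X.Opens).ι) ((⊤ : X.Opens).ι) f hf
      (hf.comp_iota ⊤ CompactSpace.isCompact_univ)
      (hf.comp_iota ⊤ CompactSpace.isCompact_univ)
      inferInstance (inferInstanceAs (Etale _)) ?_ hDtop hDtop
    intro Z j _ _ hrange
    refine isIso_pullback_snd_of_range_subset _ j ?_
    rw [hrange, AlgebraicGeometry.Scheme.Opens.range_ι]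
    simp
  exact ⟨fun f hf => main f hf, fun h => main (𝟙 S) h⟩
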